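/- The function x ↦ x²·sinc²(x²) is integrable on ℝ and ∫_ℝ x² sinc²(x²) dx = √π. -/

import Mathlib

/-!
Since `sin²(x²) / x² = ∫₀^∞ sin²(x²) e^{-s x²} ds`, Tonelli–Fubini exchanges the integral over
`x` with one over `s > 0`. For fixed `s` the integral over `x` is the real part of a complex
Gaussian integral, `(1/2) (√(π/s) - Re √(π/(s - 2i)))`, which has the explicit primitive
`√π (√s - √((√(s² + 4) + s) / 2))` in `s`; it equals `-√π` at `0` and tends to `0` at infinity.
-/

open MeasureTheory Real

/-- `sinc x = sin x / x` for `x ≠ 0`, and `sinc 0 = 1`. -/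
noncomputable def sinc (x : ℝ) : ℝ := if x = 0 then 1 else Real.sin x / x

open Set Filter Topology

theorem mul_sinc_sq_eq_integral_Ioi {y : ℝ} (hy : 0 ≤ y) :
    y * _root_.sinc y ^ 2 = ∫ s in Ioi 0, sin y ^ 2 * rexp (-s * y) := by
  rcases hy.eq_or_lt with rfl | hy
  · simp
  have hexp : ∫ s in Ioi 0, rexp (-s * y) = y⁻¹ := by
    simp_rw [neg_mul, mul_comm _ y, ← neg_mul]
    rw [integral_exp_mul_Ioi (neg_neg_of_pos hy), mul_zero, exp_zero, div_neg, neg_div, neg_neg,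
      one_div]
  rw [integral_const_mul, hexp, _root_.sinc, if_neg hy.ne']
  field_simp

theorem integral_exp_neg_mul_sq_mul_cos_mul_sq {s : ℝ} (hs : 0 < s) (b : ℝ) :
    ∫ x : ℝ, rexp (-s * x ^ 2) * cos (b * x ^ 2) =
      √π * √((√(s ^ 2 + b ^ 2) + s) / 2) / √(s ^ 2 + b ^ 2) := by
  set w : ℂ := s - b * Complex.I
  have hw : 0 < w.re := by simpa [w] using hs
  have hr : 0 < √(s ^ 2 + b ^ 2) := by positivity
  have hnorm : ‖w‖ = √(s ^ 2 + b ^ 2) := by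
    simp [w, Complex.norm_def, Complex.normSq_apply, sq]
  calc ∫ x : ℝ, rexp (-s * x ^ 2) * cos (b * x ^ 2)
      = ∫ x : ℝ, (Complex.exp (-w * (x : ℂ) ^ 2)).re := by
        congr 1 with x
        simp [w, Complex.exp_re, Complex.mul_re, Complex.mul_im, ← Complex.ofReal_pow]
    _ = ((π / w) ^ (2⁻¹ : ℂ)).re := by
        rw [← one_div, ← integral_gaussian_complex hw]
        exact integral_re (integrable_cexp_neg_mul_sq hw)
    _ = √(π * ((√(s ^ 2 + b ^ 2) + s) / 2) / √(s ^ 2 + b ^ 2) ^ 2) := by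
        rw [Complex.cpow_inv_two_re, norm_div, hnorm, Complex.norm_real, norm_of_nonneg pi_pos.le,
          Complex.div_re, Complex.normSq_eq_norm_sq, hnorm]
        congr 1
        simp only [w, Complex.ofReal_re, Complex.ofReal_im, Complex.sub_re, Complex.mul_re,
          Complex.I_re, Complex.I_im]
        field_simp
        ring
    _ = √π * √((√(s ^ 2 + b ^ 2) + s) / 2) / √(s ^ 2 + b ^ 2) := by
        rw [sqrt_div' _ (by positivity), sqrt_mul pi_pos.le, sqrt_sq hr.le]

noncomputable def sinSqGaussIntegral (s : ℝ) : ℝ :=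
  √π / 2 * ((√s)⁻¹ - √((√(s ^ 2 + 4) + s) / 2) / √(s ^ 2 + 4))

noncomputable def sinSqGaussPrimitive (s : ℝ) : ℝ :=
  √π * (√s - √((√(s ^ 2 + 4) + s) / 2))

theorem integrable_sin_sq_mul_exp_neg_mul_sq {s : ℝ} (hs : 0 < s) :
    Integrable fun x : ℝ => sin (x ^ 2) ^ 2 * rexp (-s * x ^ 2) :=
  (integrable_exp_neg_mul_sq hs).bdd_mul (c := 1) (by fun_prop) <| .of_forall fun x => by
    simpa [abs_le, ← sq_le_one_iff_abs_le_one] using sin_sq_le_one (x ^ 2)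

theorem integral_sin_sq_mul_exp_neg_mul_sq {s : ℝ} (hs : 0 < s) :
    ∫ x : ℝ, sin (x ^ 2) ^ 2 * rexp (-s * x ^ 2) = sinSqGaussIntegral s := by
  have hcos := integral_exp_neg_mul_sq_mul_cos_mul_sq hs 2
  rw [show (2 : ℝ) ^ 2 = 4 by norm_num] at hcos
  have hexp : ∫ x : ℝ, rexp (-s * x ^ 2) = √π * (√s)⁻¹ := by
    rw [integral_gaussian, sqrt_div' _ hs.le, div_eq_mul_inv]
  calc ∫ x : ℝ, sin (x ^ 2) ^ 2 * rexp (-s * x ^ 2)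
      = ∫ x : ℝ, (rexp (-s * x ^ 2) - rexp (-s * x ^ 2) * cos (2 * x ^ 2)) / 2 := by
        congr 1 with x
        rw [cos_two_mul]
        linear_combination rexp (-s * x ^ 2) * sin_sq_add_cos_sq (x ^ 2)
    _ = sinSqGaussIntegral s := by
        have hint : Integrable fun x : ℝ => rexp (-s * x ^ 2) * cos (2 * x ^ 2) :=
          (integrable_exp_neg_mul_sq hs).mul_bdd (c := 1) (by fun_prop)
            (.of_forall fun x => by simpa using abs_cos_le_one _)
        rw [integral_div, integral_sub (integrable_exp_neg_mul_sq hs) hint, hexp, hcos,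
          sinSqGaussIntegral]
        ring

theorem hasDerivAt_sinSqGaussPrimitive {s : ℝ} (hs : 0 < s) :
    HasDerivAt sinSqGaussPrimitive (sinSqGaussIntegral s) s := by
  set r := √(s ^ 2 + 4)
  set q := √((r + s) / 2)
  have hr : 0 < r := by positivity
  have hrs : 0 < (r + s) / 2 := by positivity
  have hq : 0 < q := sqrt_pos.2 hrs
  have hq_sq : q ^ 2 = (r + s) / 2 := sq_sqrt (by positivity)
  have hr' : HasDerivAt (fun t : ℝ => √(t ^ 2 + 4)) (2 * s / (2 * r)) s := by
    simpa using ((hasDerivAt_pow 2 s).add_const 4).sqrt (by positivity)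
  have hq' : HasDerivAt (fun t : ℝ => √((√(t ^ 2 + 4) + t) / 2))
      ((2 * s / (2 * r) + 1) / 2 / (2 * q)) s :=
    ((hr'.add (hasDerivAt_id s)).div_const 2).sqrt hrs.ne'
  refine (((hasDerivAt_sqrt hs.ne').sub hq').const_mul √π).congr_deriv ?_
  rw [sinSqGaussIntegral]
  field_simp
  linear_combination 2 * r * √s * hq_sq

-- Rationalising `√s - √((√(s ^ 2 + 4) + s) / 2)` exhibits the decay at infinity.
theorem sinSqGaussPrimitive_eq_neg_div {s : ℝ} (hs : 0 < s) :
    sinSqGaussPrimitive s =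
      -2 * √π / ((√(s ^ 2 + 4) + s) * (√((√(s ^ 2 + 4) + s) / 2) + √s)) := by
  set r := √(s ^ 2 + 4)
  set q := √((r + s) / 2)
  have hr_sq : r ^ 2 = s ^ 2 + 4 := sq_sqrt (by positivity)
  have hq_sq : q ^ 2 = (r + s) / 2 := sq_sqrt (by positivity)
  have hs_sq : √s ^ 2 = s := sq_sqrt hs.le
  rw [sinSqGaussPrimitive, eq_div_iff (by positivity)]
  linear_combination √π * ((r + s) * hs_sq - (r + s) * hq_sq - hr_sq / 2)

theorem tendsto_sinSqGaussPrimitive_atTop : Tendsto sinSqGaussPrimitive atTop (𝓝 0) := by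
  have hden : Tendsto (fun s : ℝ => (√(s ^ 2 + 4) + s) * (√((√(s ^ 2 + 4) + s) / 2) + √s))
      atTop atTop := by
    refine Tendsto.atTop_mul_atTop₀ ?_ ?_
    · exact tendsto_atTop_mono (fun _ => le_add_of_nonneg_left (sqrt_nonneg _)) tendsto_id
    · exact tendsto_atTop_mono (fun _ => le_add_of_nonneg_left (sqrt_nonneg _)) tendsto_sqrt_atTop
  refine ((tendsto_const_nhds (x := -2 * √π)).div_atTop hden).congr' ?_
  filter_upwards [eventually_gt_atTop 0] with s hs
  exact (sinSqGaussPrimitive_eq_neg_div hs).symm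

theorem sinSqGaussIntegral_nonneg {s : ℝ} (hs : 0 < s) : 0 ≤ sinSqGaussIntegral s :=
  integral_sin_sq_mul_exp_neg_mul_sq hs ▸ integral_nonneg fun _ => by positivity

theorem continuous_sinSqGaussPrimitive : Continuous sinSqGaussPrimitive := by
  unfold sinSqGaussPrimitive
  fun_prop

theorem sinSqGaussPrimitive_zero : sinSqGaussPrimitive 0 = -√π := by
  norm_num [sinSqGaussPrimitive, show (4 : ℝ) = 2 ^ 2 by norm_num]

theorem integrableOn_sinSqGaussIntegral : IntegrableOn sinSqGaussIntegral (Ioi 0) :=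
  integrableOn_Ioi_deriv_of_nonneg continuous_sinSqGaussPrimitive.continuousWithinAt
    (fun _ hs => hasDerivAt_sinSqGaussPrimitive hs) (fun _ hs => sinSqGaussIntegral_nonneg hs)
    tendsto_sinSqGaussPrimitive_atTop

theorem integral_Ioi_sinSqGaussIntegral : ∫ s in Ioi 0, sinSqGaussIntegral s = √π := by
  rw [integral_Ioi_of_hasDerivAt_of_nonneg continuous_sinSqGaussPrimitive.continuousWithinAt
    (fun _ hs => hasDerivAt_sinSqGaussPrimitive hs) (fun _ hs => sinSqGaussIntegral_nonneg hs)
    tendsto_sinSqGaussPrimitive_atTop, sinSqGaussPrimitive_zero, zero_sub, neg_neg]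

theorem integrable_sin_sq_mul_exp_neg_mul_sq_prod :
    Integrable (fun p : ℝ × ℝ => sin (p.2 ^ 2) ^ 2 * rexp (-p.1 * p.2 ^ 2))
      ((volume.restrict (Ioi 0)).prod volume) := by
  refine (integrable_prod_iff (by fun_prop)).2 ⟨?_, ?_⟩
  · exact (ae_restrict_iff' measurableSet_Ioi).2 <| .of_forall fun s hs =>
      integrable_sin_sq_mul_exp_neg_mul_sq hs
  · refine integrableOn_sinSqGaussIntegral.congr_fun (fun s hs => ?_) measurableSet_Ioi
    rw [← integral_sin_sq_mul_exp_neg_mul_sq hs]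
    exact integral_congr_ae <| .of_forall fun x => (norm_of_nonneg (by positivity)).symm

theorem integral_sq_mul_sinc_sq :
    Integrable (fun x : ℝ => x ^ 2 * (_root_.sinc (x ^ 2)) ^ 2) ∧
    ∫ x : ℝ, x ^ 2 * (_root_.sinc (x ^ 2)) ^ 2 = Real.sqrt Real.pi := by
  have hF := integrable_sin_sq_mul_exp_neg_mul_sq_prod
  simp_rw [mul_sinc_sq_eq_integral_Ioi (sq_nonneg _)]
  refine ⟨hF.integral_prod_right, ?_⟩
  rw [← integral_integral_swap hF, ← integral_Ioi_sinSqGaussIntegral]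
  exact setIntegral_congr_fun measurableSet_Ioi fun s hs => integral_sin_sq_mul_exp_neg_mul_sq hs
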